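/- arXiv:2005.13330 — 2 statements merged into one kernel-verified Lean document; each statement's English description precedes it below -/
import Mathlib

section
/- Cyclotomic (multisection) property: for every positive integer m, every complex number a with Re(a) > 0, every complex number b, and every z ∈ ℂ, one has E_{a·m, b}(z^m) = (1/m) · ∑_{r=0}^{m−1} E_{a,b}(z · e^{2πi r/m}). -/
/-!
Expanding each `E_{a,b}(z ω^r)`, `ω = e^{2πi/m}`, as a power series and summing over `r`, the
sum `∑_r ω^{rk}` is `m` when `m ∣ k` and `0` otherwise, so only the terms with `k = m j` survive,
and these are the terms of `E_{am,b}(z^m)`. Exchanging the finite sum with the series needs its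
absolute convergence: writing `b + a k = w + n` with `1 ≤ re w ≤ 2`, one has
`|1/Γ(w + n)| ≤ |1/Γ(w)| / n!`, the reflection formula (with compactness near the real axis)
bounds `|1/Γ(w)|` by `C e^{π |im w|}` on that strip, and `n` grows linearly in `k` as `re a > 0`.
-/

open Complex Real Filter
open scoped Nat

noncomputable def mittagLeffler (a b z : ℂ) : ℂ :=
  ∑' k : ℕ, z ^ k / Complex.Gamma (b + a * k)

lemma Real.Gamma_le_one_of_mem_Icc {x : ℝ} (hx : x ∈ Set.Icc (1 : ℝ) 2) : Real.Gamma x ≤ 1 := by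
  have := Real.convexOn_Gamma.le_on_segment (by norm_num : (1 : ℝ) ∈ Set.Ioi 0)
    (by norm_num : (2 : ℝ) ∈ Set.Ioi 0) (by rwa [segment_eq_Icc (by norm_num)])
  simpa [Real.Gamma_two] using this

namespace Complex

lemma norm_sin_le_exp_abs_im (w : ℂ) : ‖sin w‖ ≤ Real.exp |w.im| := by
  have hexp_le : Real.exp w.im + Real.exp (-w.im) ≤ 2 * Real.exp |w.im| := by
    have := Real.exp_le_exp.2 (le_abs_self w.im)
    have := Real.exp_le_exp.2 (neg_le_abs w.im)
    linarith
  calc ‖sin w‖ = ‖exp (-w * I) - exp (w * I)‖ / 2 := by simp [sin]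
    _ ≤ (‖exp (-w * I)‖ + ‖exp (w * I)‖) / 2 := by gcongr; exact norm_sub_le _ _
    _ = (Real.exp w.im + Real.exp (-w.im)) / 2 := by simp [norm_exp]
    _ ≤ Real.exp |w.im| := by linarith

lemma norm_Gamma_le_Gamma_re {s : ℂ} (hs : 0 < s.re) : ‖Gamma s‖ ≤ Real.Gamma s.re := by
  rw [Gamma_eq_integral hs, Real.Gamma_eq_integral hs, GammaIntegral]
  refine (MeasureTheory.norm_integral_le_integral_norm _).trans_eq ?_
  refine MeasureTheory.setIntegral_congr_fun measurableSet_Ioi fun x hx ↦ ?_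
  simp [norm_cpow_eq_rpow_re_of_pos hx, norm_exp]

lemma norm_inv_Gamma_le_of_one_le_abs_im {w : ℂ} (h1 : 1 ≤ w.re) (h2 : w.re ≤ 2)
    (him : 1 ≤ |w.im|) : ‖(Gamma w)⁻¹‖ ≤ Real.exp (π * |w.im|) / π := by
  have him0 : w.im ≠ 0 := by rintro h; norm_num [h] at him
  have hsin : sin (π * w) ≠ 0 := by
    rw [Ne, sin_eq_zero_iff]
    rintro ⟨k, hk⟩
    exact him0 (by simpa [Real.pi_ne_zero] using congrArg im hk)
  have hreflect : (Gamma w)⁻¹ = Gamma (1 - w) * sin (π * w) / π := by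
    have := Gamma_mul_Gamma_one_sub w
    have hΓ : Gamma w ≠ 0 := Gamma_ne_zero_of_re_pos (by linarith)
    have hπ : (π : ℂ) ≠ 0 := ofReal_ne_zero.2 Real.pi_ne_zero
    field_simp
    rw [this]; field_simp
  have hsub_ne : ∀ c : ℝ, (c : ℂ) - w ≠ 0 := fun c h ↦ him0 (by simpa using congrArg im h)
  have hshift : Gamma (3 - w) = (2 - w) * ((1 - w) * Gamma (1 - w)) := by
    rw [show (3 : ℂ) - w = (2 - w) + 1 by ring, Gamma_add_one _ (by exact_mod_cast hsub_ne 2),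
      show (2 : ℂ) - w = (1 - w) + 1 by ring, Gamma_add_one _ (by exact_mod_cast hsub_ne 1)]
  have hΓ3 : ‖Gamma (3 - w)‖ ≤ 1 := by
    have hre : (3 - w).re = 3 - w.re := by simp
    refine (norm_Gamma_le_Gamma_re (by rw [hre]; linarith)).trans ?_
    exact Real.Gamma_le_one_of_mem_Icc (by rw [hre]; constructor <;> linarith)
  have hfar : ∀ c : ℝ, 1 ≤ ‖(c : ℂ) - w‖ := fun c ↦
    him.trans (by simpa using abs_im_le_norm ((c : ℂ) - w))
  have hΓ1 : ‖Gamma (1 - w)‖ ≤ 1 := by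
    calc ‖Gamma (1 - w)‖ ≤ ‖(2 : ℂ) - w‖ * (‖(1 : ℂ) - w‖ * ‖Gamma (1 - w)‖) := by
          refine le_mul_of_one_le_left (by positivity) (by exact_mod_cast hfar 2) |>.trans' ?_
          exact le_mul_of_one_le_left (by positivity) (by exact_mod_cast hfar 1)
      _ = ‖Gamma (3 - w)‖ := by rw [hshift, norm_mul, norm_mul]
      _ ≤ 1 := hΓ3
  have hsin_le : ‖sin (π * w)‖ ≤ Real.exp (π * |w.im|) := by
    simpa [abs_mul, abs_of_pos pi_pos] using norm_sin_le_exp_abs_im (π * w)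
  rw [hreflect, norm_div, norm_mul, norm_real, Real.norm_of_nonneg pi_pos.le]
  gcongr
  simpa using mul_le_mul hΓ1 hsin_le (norm_nonneg _) zero_le_one

lemma exists_norm_inv_Gamma_le_on_strip : ∃ C, 0 ≤ C ∧
    ∀ w : ℂ, 1 ≤ w.re → w.re ≤ 2 → ‖(Gamma w)⁻¹‖ ≤ C * Real.exp (π * |w.im|) := by
  have hK : IsCompact (Set.Icc (1 : ℝ) 2 ×ℂ Set.Icc (-1) 1) := isCompact_Icc.reProdIm isCompact_Icc
  obtain ⟨C, hC⟩ := hK.exists_bound_of_continuousOn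
    differentiable_one_div_Gamma.continuous.continuousOn
  refine ⟨max C π⁻¹, le_max_of_le_right (by positivity), fun w h1 h2 ↦ ?_⟩
  rcases le_total |w.im| 1 with him | him
  · calc ‖(Gamma w)⁻¹‖ ≤ C := hC w (mem_reProdIm.2 ⟨⟨h1, h2⟩, abs_le.1 him⟩)
      _ ≤ max C π⁻¹ * 1 := by rw [mul_one]; exact le_max_left _ _
      _ ≤ max C π⁻¹ * Real.exp (π * |w.im|) := by
          gcongr
          exact Real.one_le_exp (by positivity)
  · calc ‖(Gamma w)⁻¹‖ ≤ Real.exp (π * |w.im|) / π :=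
          norm_inv_Gamma_le_of_one_le_abs_im h1 h2 him
      _ = π⁻¹ * Real.exp (π * |w.im|) := div_eq_inv_mul _ _
      _ ≤ max C π⁻¹ * Real.exp (π * |w.im|) := by gcongr; exact le_max_right _ _

lemma factorial_mul_norm_inv_Gamma_add_nat_le {w : ℂ} (hw : 1 ≤ w.re) (n : ℕ) :
    (n ! : ℝ) * ‖(Gamma (w + n))⁻¹‖ ≤ ‖(Gamma w)⁻¹‖ := by
  induction n with
  | zero => simp
  | succ n ih =>
    have hnorm : (n : ℝ) + 1 ≤ ‖w + n‖ := by
      refine le_trans ?_ (re_le_norm _)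
      simp only [add_re, natCast_re]
      linarith
    calc ((n + 1)! : ℝ) * ‖(Gamma (w + (n + 1 : ℕ)))⁻¹‖
        ≤ n ! * (‖w + n‖ * ‖(Gamma (w + n + 1))⁻¹‖) := by
          rw [Nat.factorial_succ, Nat.cast_mul, Nat.cast_succ, Nat.cast_succ, ← add_assoc,
            mul_comm ((n : ℝ) + 1), mul_assoc]
          gcongr
      _ = n ! * ‖(Gamma (w + n))⁻¹‖ := by
          rw [one_div_Gamma_eq_self_mul_one_div_Gamma_add_one (w + n), norm_mul]
      _ ≤ ‖(Gamma w)⁻¹‖ := ih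

/-- The free parameter `x` enters through `1 / n! ≤ exp x / x ^ n` for `n = ⌊re s⌋₊ - 1`. -/
lemma exists_norm_inv_Gamma_le : ∃ C, 0 ≤ C ∧ ∀ s : ℂ, 1 ≤ s.re → ∀ x : ℝ, 1 ≤ x →
    ‖(Gamma s)⁻¹‖ ≤ C * Real.exp (π * |s.im|) * Real.exp x / x ^ (s.re - 2) := by
  obtain ⟨C, hC0, hC⟩ := exists_norm_inv_Gamma_le_on_strip
  refine ⟨C, hC0, fun s hs x hx ↦ ?_⟩
  set n := ⌊s.re⌋₊ - 1
  have hn : (n : ℝ) = ⌊s.re⌋₊ - 1 := by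
    rw [Nat.cast_sub (Nat.le_floor (by simpa using hs)), Nat.cast_one]
  have hfloor_le := Nat.floor_le (zero_le_one.trans hs)
  have hlt_floor := Nat.lt_floor_add_one s.re
  set w := s - n
  have hw1 : 1 ≤ w.re := by simp only [w, sub_re, natCast_re]; linarith
  have hw2 : w.re ≤ 2 := by simp only [w, sub_re, natCast_re]; linarith
  have hwim : w.im = s.im := by simp [w]
  have hfact : x ^ (s.re - 2) ≤ x ^ n := by
    rw [← Real.rpow_natCast]
    exact Real.rpow_le_rpow_of_exponent_le hx (by linarith)
  have hxpos : 0 < x ^ (s.re - 2) := Real.rpow_pos_of_pos (by linarith) _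
  rw [le_div_iff₀ hxpos]
  calc ‖(Gamma s)⁻¹‖ * x ^ (s.re - 2) ≤ (x ^ n / n !) * (n ! * ‖(Gamma (w + n))⁻¹‖) := by
        rw [show w + n = s by simp [w]]
        field_simp
        gcongr
    _ ≤ Real.exp x * (C * Real.exp (π * |s.im|)) := by
        rw [← hwim]
        exact mul_le_mul (Real.pow_div_factorial_le_exp x (by linarith) n)
          ((factorial_mul_norm_inv_Gamma_add_nat_le hw1 n).trans (hC w hw1 hw2))
          (by positivity) (Real.exp_pos x).le
    _ = C * Real.exp (π * |s.im|) * Real.exp x := by ring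

lemma summable_pow_div_Gamma {a : ℂ} (ha : 0 < a.re) (b z : ℂ) :
    Summable fun k : ℕ ↦ z ^ k / Gamma (b + a * k) := by
  obtain ⟨C, hC0, hC⟩ := exists_norm_inv_Gamma_le
  set R := ‖z‖ * Real.exp (π * |a.im|)
  have hR : 0 ≤ R := by positivity
  set x := (2 * R + 1) ^ a.re⁻¹
  have hx : 1 ≤ x := Real.one_le_rpow (by linarith) (inv_nonneg.2 ha.le)
  have hxa : x ^ a.re = 2 * R + 1 := Real.rpow_inv_rpow (by positivity) ha.ne'
  have hρ : R / (2 * R + 1) < 1 := (div_lt_one (by positivity)).2 (by linarith)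
  have hre : Tendsto (fun k : ℕ ↦ (b + a * k).re) atTop atTop := by
    simpa using tendsto_atTop_add_const_left _ b.re
      (tendsto_natCast_atTop_atTop.const_mul_atTop ha)
  refine ((summable_geometric_of_lt_one (by positivity) hρ).mul_left
    (C * Real.exp (π * |b.im|) * Real.exp x / x ^ (b.re - 2))).of_norm_bounded_eventually_nat ?_
  filter_upwards [hre.eventually_ge_atTop 1] with k hk
  have hpow : x ^ ((b + a * k).re - 2) = x ^ (b.re - 2) * (2 * R + 1) ^ k := by
    rw [← hxa, ← Real.rpow_mul_natCast (by linarith), ← Real.rpow_add (by linarith)]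
    simp only [add_re, mul_re, natCast_re, natCast_im, mul_zero, sub_zero]
    ring_nf
  have him : Real.exp (π * |(b + a * k).im|) ≤
      Real.exp (π * |b.im|) * Real.exp (π * |a.im|) ^ k := by
    rw [← Real.exp_nat_mul, ← Real.exp_add, Real.exp_le_exp]
    simp only [add_im, mul_im, natCast_re, natCast_im, mul_zero, zero_add]
    have := abs_add_le b.im (a.im * k)
    rw [abs_mul, Nat.abs_cast] at this
    nlinarith [pi_pos]
  calc ‖z ^ k / Gamma (b + a * k)‖ = ‖z‖ ^ k * ‖(Gamma (b + a * k))⁻¹‖ := by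
        rw [div_eq_mul_inv, norm_mul, norm_pow]
    _ ≤ ‖z‖ ^ k * (C * (Real.exp (π * |b.im|) * Real.exp (π * |a.im|) ^ k) * Real.exp x /
          (x ^ (b.re - 2) * (2 * R + 1) ^ k)) := by
        grw [hC _ hk x hx, hpow, him]
    _ = C * Real.exp (π * |b.im|) * Real.exp x / x ^ (b.re - 2) * (R / (2 * R + 1)) ^ k := by
        rw [div_pow, mul_pow]
        field_simp

end Complex

lemma IsPrimitiveRoot.sum_pow_pow {R : Type*} [CommRing R] [IsDomain R] {ζ : R} {m : ℕ}
    (hζ : IsPrimitiveRoot ζ m) (k : ℕ) :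
    ∑ r ∈ Finset.range m, (ζ ^ r) ^ k = if m ∣ k then (m : R) else 0 := by
  simp_rw [← pow_mul, mul_comm _ k, pow_mul]
  split_ifs with hk
  · simp [(hζ.pow_eq_one_iff_dvd k).2 hk]
  · have hgeom := geom_sum_mul (ζ ^ k) m
    rw [← pow_mul, mul_comm k m, pow_mul, hζ.pow_eq_one, one_pow, sub_self] at hgeom
    exact (mul_eq_zero.1 hgeom).resolve_right
      (sub_ne_zero.2 (mt (hζ.pow_eq_one_iff_dvd k).1 hk))

lemma IsPrimitiveRoot.sum_tsum_pow_mul {ζ : ℂ} {m : ℕ} (hζ : IsPrimitiveRoot ζ m)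
    {f : ℕ → ℂ} (hf : Summable f) :
    ∑ r ∈ Finset.range m, ∑' k, (ζ ^ r) ^ k * f k = m * ∑' j, f (m * j) := by
  rcases m.eq_zero_or_pos with rfl | hm
  · simp
  have hsummable (r : ℕ) : Summable fun k ↦ (ζ ^ r) ^ k * f k :=
    .of_norm <| by simpa [norm_pow, hζ.norm'_eq_one hm.ne'] using summable_norm_iff.2 hf
  have hsupp : Function.support (fun k ↦ if m ∣ k then (m : ℂ) * f k else 0) ⊆
      Set.range (m * ·) := by
    intro k hk
    by_contra hk'
    exact hk (if_neg fun ⟨j, hj⟩ ↦ hk' ⟨j, hj.symm⟩)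
  calc ∑ r ∈ Finset.range m, ∑' k, (ζ ^ r) ^ k * f k
      = ∑' k, (∑ r ∈ Finset.range m, (ζ ^ r) ^ k) * f k := by
        simp_rw [Finset.sum_mul]
        exact (Summable.tsum_finsetSum fun r _ ↦ hsummable r).symm
    _ = ∑' k, if m ∣ k then (m : ℂ) * f k else 0 := by
        simp_rw [hζ.sum_pow_pow, ite_mul, zero_mul]
    _ = ∑' j, (m : ℂ) * f (m * j) := by
        rw [← (mul_right_injective₀ hm.ne').tsum_eq hsupp]
        simp
    _ = m * ∑' j, f (m * j) := tsum_mul_left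

/-- Cyclotomic (multisection) property:
`E_{am,b}(z^m) = (1/m) ∑_{r=0}^{m−1} E_{a,b}(z e^{2πi r/m})`. -/
theorem mittagLeffler_multisection (m : ℕ) (hm : 0 < m) (a b : ℂ) (ha : 0 < a.re) (z : ℂ) :
    mittagLeffler (a * m) b (z ^ m)
      = (1 / (m : ℂ)) * ∑ r ∈ Finset.range m,
          mittagLeffler a b (z * Complex.exp (2 * Real.pi * Complex.I * r / m)) := by
  set ω := exp (2 * π * I / m)
  have hω : IsPrimitiveRoot ω m := isPrimitiveRoot_exp m hm.ne'
  have hrotate (r : ℕ) : mittagLeffler a b (z * exp (2 * π * I * r / m)) =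
      ∑' k : ℕ, (ω ^ r) ^ k * (z ^ k / Gamma (b + a * k)) := by
    have : exp (2 * π * I * r / m) = ω ^ r := by rw [← Complex.exp_nat_mul]; ring_nf
    simp_rw [mittagLeffler, this, mul_pow]
    exact tsum_congr fun k ↦ by ring
  have hsection : mittagLeffler (a * m) b (z ^ m) =
      ∑' j, z ^ (m * j) / Gamma (b + a * ↑(m * j)) := by
    simp_rw [mittagLeffler, pow_mul, Nat.cast_mul, mul_assoc]
  rw [Finset.sum_congr rfl fun r _ ↦ hrotate r,
    hω.sum_tsum_pow_mul (summable_pow_div_Gamma ha b z), hsection, one_div,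
    inv_mul_cancel_left₀ (Nat.cast_ne_zero.2 hm.ne')]
end

section
/- Integral duplication formula: let a > 0 and b > −1/2 be real numbers and z ≥ 0 a real number. Then E_{a,b}(−z) = (2^{2b−1}/√π) · ∫_0^∞ t^{b−1/2} · e^{−t} · E_{2a,2b}(−z·(4t)^a) dt. -/
/-!
Legendre's duplication formula turns `1 / Γ(b + a k)` into
`2^(2b + 2ak - 1) / √π · Γ(b + 1/2 + a k) / Γ(2b + 2ak)`, and `Γ(b + 1/2 + a k)` is Euler's
integral of `t^(b - 1/2 + a k) e^(-t)`, which needs `b > -1/2`. Summing over `k` reassembles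
the integrand `t^(b - 1/2) e^(-t) E_{2a,2b}(-z (4t)^a)`. The interchange of sum and integral
is justified by absolute convergence of the Mittag-Leffler series, which follows from the ratio
test since `Γ(y + a) / Γ(y) → ∞`, a consequence of the log-convexity of `Γ`.
-/

open MeasureTheory Real

/- Mathlib's `Real.Gamma` is `0` at the poles, so with `x / 0 = 0` the corresponding terms vanish,
as they do for the entire function `1 / Γ`. -/
noncomputable def mittagLefflerReal (a b x : ℝ) : ℝ :=
  ∑' k : ℕ, x ^ k / Real.Gamma (b + a * k)

open Filter Set

namespace Real

theorem inv_Gamma_eq_of_Gamma_add_half_ne_zero {s : ℝ} (hs : Gamma (s + 1 / 2) ≠ 0) :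
    (Gamma s)⁻¹ = 2 ^ (2 * s - 1) / √π * ((Gamma (2 * s))⁻¹ * Gamma (s + 1 / 2)) := by
  have h := congrArg (·⁻¹) (Gamma_mul_Gamma_add_half s)
  simp only [mul_inv, ← rpow_neg zero_le_two, neg_sub] at h
  calc (Gamma s)⁻¹ = (Gamma s)⁻¹ * (Gamma (s + 1 / 2))⁻¹ * Gamma (s + 1 / 2) := by
        rw [mul_assoc, inv_mul_cancel₀ hs, mul_one]
    _ = _ := by rw [h]; ring

theorem Gamma_add_one_le_Gamma_add_mul_rpow {y m : ℝ} (hy : 0 < y) (hm₀ : 0 < m)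
    (hm₁ : m < 1) :
    Gamma (y + 1) ≤ Gamma (y + m) * (y + m) ^ (1 - m) := by
  have hym : 0 < y + m := by linarith
  have h := Gamma_mul_add_mul_le_rpow_Gamma_mul_rpow_Gamma hym (by linarith : 0 < y + m + 1) hm₀
    (sub_pos.2 hm₁) (add_sub_cancel m 1)
  rwa [show m * (y + m) + (1 - m) * (y + m + 1) = y + 1 by ring, Gamma_add_one hym.ne',
    mul_rpow hym.le (Gamma_pos_of_pos hym).le, ← mul_assoc, mul_comm _ ((y + m) ^ (1 - m)),
    mul_assoc, ← rpow_add (Gamma_pos_of_pos hym), add_sub_cancel, rpow_one, mul_comm] at h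

theorem tendsto_Gamma_add_div_Gamma_atTop {a : ℝ} (ha : 0 < a) :
    Tendsto (fun y ↦ Gamma (y + a) / Gamma y) atTop atTop := by
  set m := min a (1 / 2)
  have hm₀ : 0 < m := lt_min ha one_half_pos
  have hm₁ : m < 1 := (min_le_right _ _).trans_lt one_half_lt_one
  have hma : m ≤ a := min_le_left _ _
  -- Wendel's inequality `y Γ(y) ≤ Γ(y + m) (y + m)^(1 - m)` gives the lower bound
  -- `(y + m)^m / 2`.
  have hlower : Tendsto (fun y ↦ (y + m) ^ m / 2) atTop atTop :=
    ((tendsto_rpow_atTop hm₀).comp (tendsto_atTop_add_const_right _ m tendsto_id)).atTop_div_const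
      two_pos
  refine tendsto_atTop_mono' _ ?_ hlower
  filter_upwards [eventually_ge_atTop 2] with y hy
  have hym : 0 < y + m := by linarith
  have hΓ : 0 < Gamma y := Gamma_pos_of_pos (by linarith)
  have hmono : Gamma (y + m) ≤ Gamma (y + a) :=
    Gamma_strictMonoOn_Ici.monotoneOn (mem_Ici.2 (by linarith)) (mem_Ici.2 (by linarith))
      (by linarith)
  have hwendel := Gamma_add_one_le_Gamma_add_mul_rpow (by linarith : 0 < y) hm₀ hm₁
  rw [Gamma_add_one (by linarith : y ≠ 0)] at hwendel
  have hpow : 0 < (y + m) ^ (1 - m) := rpow_pos_of_pos hym _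
  rw [div_le_div_iff₀ two_pos hΓ, ← mul_le_mul_iff_of_pos_right hpow]
  calc (y + m) ^ m * Gamma y * (y + m) ^ (1 - m) = (y + m) * Gamma y := by
        rw [mul_right_comm, ← rpow_add hym, add_sub_cancel, rpow_one]
    _ ≤ 2 * (y * Gamma y) := by nlinarith
    _ ≤ 2 * (Gamma (y + m) * (y + m) ^ (1 - m)) := by gcongr
    _ ≤ Gamma (y + a) * 2 * (y + m) ^ (1 - m) := by nlinarith

end Real

theorem summable_norm_pow_div_Gamma {a : ℝ} (ha : 0 < a) (b x : ℝ) :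
    Summable fun k : ℕ ↦ ‖x ^ k / Gamma (b + a * k)‖ := by
  have harg : Tendsto (fun k : ℕ ↦ b + a * k) atTop atTop :=
    tendsto_atTop_add_const_left _ b (tendsto_natCast_atTop_atTop.const_mul_atTop ha)
  refine summable_of_ratio_norm_eventually_le one_half_lt_one ?_
  filter_upwards [harg.eventually_ge_atTop 1,
    harg.eventually ((tendsto_Gamma_add_div_Gamma_atTop ha).eventually_ge_atTop (2 * |x|))]
    with k hk hratio
  have hΓ : 0 < Gamma (b + a * k) := Gamma_pos_of_pos (by linarith)
  have hΓa : 0 < Gamma (b + a * k + a) := Gamma_pos_of_pos (by linarith)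
  rw [le_div_iff₀ hΓ] at hratio
  simp only [norm_div, norm_pow, norm_mul, Real.norm_eq_abs, abs_abs, abs_of_pos hΓ, Nat.cast_succ,
    mul_add, mul_one, ← add_assoc, abs_of_pos hΓa, pow_succ]
  rw [div_le_iff₀ hΓa]
  calc |x| ^ k * |x| = 1 / 2 * (|x| ^ k / Gamma (b + a * k)) * (2 * |x| * Gamma (b + a * k)) := by
        field_simp
    _ ≤ _ := by gcongr

theorem hasSum_mul_Gamma_integral_tsum {ι : Type*} [Countable ι] {c s : ι → ℝ}
    (hs : ∀ i, 0 < s i) (hsum : Summable fun i ↦ |c i| * Gamma (s i)) :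
    HasSum (fun i ↦ c i * Gamma (s i))
      (∫ t in Ioi 0, ∑' i, c i * (exp (-t) * t ^ (s i - 1))) := by
  have hnorm : ∀ i, ∫ t in Ioi 0, ‖c i * (exp (-t) * t ^ (s i - 1))‖ =
      |c i| * Gamma (s i) := by
    intro i
    rw [Gamma_eq_integral (hs i), ← integral_const_mul]
    refine setIntegral_congr_fun measurableSet_Ioi fun t (ht : 0 < t) ↦ ?_
    rw [norm_mul, Real.norm_eq_abs, Real.norm_of_nonneg (by positivity)]
  have hintegral : (fun i ↦ c i * Gamma (s i)) =
      fun i ↦ ∫ t in Ioi 0, c i * (exp (-t) * t ^ (s i - 1)) :=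
    funext fun i ↦ by rw [integral_const_mul, Gamma_eq_integral (hs i)]
  rw [hintegral]
  exact hasSum_integral_of_summable_integral_norm
    (fun i ↦ (GammaIntegral_convergent (hs i)).const_mul (c i))
    (hsum.congr fun i ↦ (hnorm i).symm)

theorem pow_div_Gamma_eq_duplication (a b x : ℝ) (k : ℕ) (hk : 0 < b + 1 / 2 + a * k) :
    x ^ k / Gamma (b + a * k) = 2 ^ (2 * b - 1) / √π *
      ((x * 4 ^ a) ^ k / Gamma (2 * b + 2 * a * k) * Gamma (b + 1 / 2 + a * k)) := by
  have hΓ : Gamma (b + a * k + 1 / 2) ≠ 0 := (Gamma_pos_of_pos (by linarith)).ne'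
  have hpow : (2 : ℝ) ^ (2 * (b + a * k) - 1) = 2 ^ (2 * b - 1) * (4 ^ a) ^ k := by
    rw [show (4 : ℝ) = 2 ^ (2 : ℝ) by norm_num, ← rpow_mul zero_le_two,
      ← rpow_mul_natCast zero_le_two, ← rpow_add two_pos]
    ring_nf
  rw [div_eq_mul_inv, inv_Gamma_eq_of_Gamma_add_half_ne_zero hΓ, hpow, mul_pow]
  ring_nf

theorem mittagLeffler_duplication_general (a b z : ℝ) (ha : 0 < a) (hb : -(1/2) < b) :
    mittagLefflerReal a b (-z)
      = ((2:ℝ) ^ (2 * b - 1) / Real.sqrt Real.pi) *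
          ∫ t in Set.Ioi (0:ℝ),
            t ^ (b - 1/2) * Real.exp (-t) * mittagLefflerReal (2 * a) (2 * b) (-(z * (4 * t) ^ a)) := by
  set c : ℕ → ℝ := fun k ↦ (-z * 4 ^ a) ^ k / Gamma (2 * b + 2 * a * k)
  set s : ℕ → ℝ := fun k ↦ b + 1 / 2 + a * k
  have hs : ∀ k, 0 < s k := fun k ↦ add_pos_of_pos_of_nonneg (by linarith) (by positivity)
  have hterm : ∀ k : ℕ,
      (-z) ^ k / Gamma (b + a * k) = 2 ^ (2 * b - 1) / √π * (c k * Gamma (s k)) :=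
    fun k ↦ pow_div_Gamma_eq_duplication a b (-z) k (hs k)
  have hsum : Summable fun k ↦ |c k| * Gamma (s k) := by
    have hC : (0 : ℝ) < 2 ^ (2 * b - 1) / √π := by positivity
    refine (summable_mul_left_iff hC.ne').1
      ((summable_norm_pow_div_Gamma ha b (-z)).congr fun k ↦ ?_)
    rw [hterm, norm_mul, norm_mul, Real.norm_of_nonneg hC.le, Real.norm_eq_abs,
      Real.norm_of_nonneg (Gamma_pos_of_pos (hs k)).le]
  have hintegrand : ∀ t ∈ Ioi (0 : ℝ), t ^ (b - 1 / 2) * exp (-t) *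
      mittagLefflerReal (2 * a) (2 * b) (-(z * (4 * t) ^ a))
        = ∑' k, c k * (exp (-t) * t ^ (s k - 1)) := by
    intro t (ht : 0 < t)
    rw [mittagLefflerReal, ← tsum_mul_left]
    refine tsum_congr fun k ↦ ?_
    rw [mul_rpow zero_le_four ht.le, show s k - 1 = b - 1 / 2 + a * k by simp only [s]; ring,
      rpow_add ht, rpow_mul_natCast ht.le]
    simp only [c]
    ring
  rw [mittagLefflerReal, tsum_congr hterm, tsum_mul_left,
    (hasSum_mul_Gamma_integral_tsum hs hsum).tsum_eq,
    setIntegral_congr_fun measurableSet_Ioi hintegrand]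

/-- Integral duplication formula: for real `a > 0`, `b > −1/2` and `z ≥ 0`,
`E_{a,b}(−z) = (2^{2b−1}/√π) ∫_0^∞ t^{b−1/2} e^{−t} E_{2a,2b}(−z (4t)^a) dt`. -/
theorem mittagLeffler_duplication (a b z : ℝ) (ha : 0 < a) (hb : -(1/2) < b) (hz : 0 ≤ z) :
    mittagLefflerReal a b (-z)
      = ((2:ℝ) ^ (2 * b - 1) / Real.sqrt Real.pi) *
          ∫ t in Set.Ioi (0:ℝ),
            t ^ (b - 1/2) * Real.exp (-t) * mittagLefflerReal (2 * a) (2 * b) (-(z * (4 * t) ^ a)) :=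
  mittagLeffler_duplication_general a b z ha hb
end
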